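/- Let A be a Dedekind domain with fraction field K, let L be a finite separable field extension of K, and let B be the integral closure of A in L (so B is a Dedekind domain with fraction field L). Let 𝒟 denote the different ideal of B over A, and let Tr_{L/K} : L → K be the field trace. Then for a nonzero fractional ideal 𝔇 of B and a nonzero fractional ideal 𝔡 of A: Tr_{L/K}(𝔇) ⊆ 𝔡 if and only if 𝔇 ⊆ 𝔡·𝒟^{−1} (where 𝔡·𝒟^{−1} denotes the fractional ideal of B obtained by extending 𝔡 to B and multiplying by the inverse of the different). -/

import Mathlib

open scoped nonZeroDivisors

/-!
By definition `𝒟⁻¹` is the trace dual `Bᵛ` of `B`, and since the duality `I ≤ Jᵛ ↔ J ≤ Iᵛ` is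
symmetric, `𝔇 ≤ 𝔡 𝒟⁻¹ ↔ 𝔇 𝔡⁻¹ ≤ Bᵛ ↔ 𝔡⁻¹ B ≤ 𝔇ᵛ`. As `𝔡⁻¹ B` is spanned by `𝔡⁻¹` and the trace
is `K`-linear, the last condition says `𝔡⁻¹ · Tr(𝔇) ⊆ A`, that is `Tr(𝔇) ⊆ (𝔡⁻¹)⁻¹ = 𝔡`.
-/

namespace Submodule

variable {A K L B : Type*} [CommRing A] [Field K] [CommRing B] [Field L]
  [Algebra A K] [Algebra B L] [Algebra A B] [Algebra K L] [Algebra A L]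
  [IsScalarTower A K L] [IsScalarTower A B L]

theorem algebraMap_mem_traceDual_iff {M : Submodule B L} {c : K} :
    algebraMap K L c ∈ traceDual A K M ↔
      ∀ x ∈ M, c * Algebra.trace K L x ∈ (algebraMap A K).range := by
  simp only [mem_traceDual, Algebra.traceForm_apply, ← Algebra.smul_def, map_smul, smul_eq_mul]

theorem span_algebraMap_image_le_traceDual_iff {M : Submodule B L} {s : Set K} :
    span B (algebraMap K L '' s) ≤ traceDual A K M ↔
      ∀ c ∈ s, ∀ x ∈ M, c * Algebra.trace K L x ∈ (algebraMap A K).range := by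
  rw [span_le, Set.image_subset_iff]
  exact forall₂_congr fun _ _ ↦ algebraMap_mem_traceDual_iff

end Submodule

namespace FractionalIdeal

theorem le_mul_iff_mul_inv_le {R K : Type*} [CommRing R] [IsDedekindDomain R] [Field K]
    [Algebra R K] [IsFractionRing R K] {I J X : FractionalIdeal R⁰ K} (hJ : J ≠ 0) :
    I ≤ J * X ↔ I * J⁻¹ ≤ X := by
  rw [mul_comm, ← div_inv_eq_mul, le_div_iff_mul_le (inv_ne_zero hJ)]

theorem mem_iff_forall_mem_inv_mul_mem_range {R K : Type*} [CommRing R] [IsDedekindDomain R]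
    [Field K] [Algebra R K] [IsFractionRing R K] {I : FractionalIdeal R⁰ K} (hI : I ≠ 0) {x : K} :
    x ∈ I ↔ ∀ c ∈ I⁻¹, c * x ∈ (algebraMap R K).range := by
  rw [← inv_inv I, mem_inv_iff (inv_ne_zero hI), inv_inv]
  simp only [mul_comm x, mem_one_iff, RingHom.mem_range]

end FractionalIdeal

open FractionalIdeal Submodule in
theorem trace_fractionalIdeal_le_iff_le_mul_inv_differentIdeal_general
    (A K L B : Type*) [CommRing A] [Field K] [CommRing B] [Field L]
    [Algebra A K] [IsFractionRing A K]
    [Algebra B L] [IsFractionRing B L]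
    [Algebra A B] [Algebra K L] [Algebra A L]
    [IsScalarTower A K L] [IsScalarTower A B L]
    [IsIntegralClosure B A L]
    [FiniteDimensional K L] [Algebra.IsSeparable K L]
    [IsDedekindDomain A] [IsDedekindDomain B] [NoZeroSMulDivisors A B]
    (𝔇 : FractionalIdeal B⁰ L)
    (𝔡 : FractionalIdeal A⁰ K) (h𝔡 : 𝔡 ≠ 0) :
    (∀ x ∈ 𝔇, Algebra.trace K L x ∈ 𝔡) ↔
      𝔇 ≤
        FractionalIdeal.extended L
            (nonZeroDivisors_le_comap_nonZeroDivisors_of_injective _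
              (FaithfulSMul.algebraMap_injective A B)) 𝔡 *
          ((differentIdeal A B : FractionalIdeal B⁰ L))⁻¹ := by
  change _ ↔ 𝔇 ≤ extendedHom L B 𝔡 * _
  have : Algebra.IsIntegral A B := IsIntegralClosure.isIntegral_algebra A L
  have h𝔡B : extendedHom L B 𝔡 ≠ 0 := (extendedHom_eq_zero_iff L B).not.mpr h𝔡
  rw [coeIdeal_differentIdeal A K L B, inv_inv, le_mul_iff_mul_inv_le h𝔡B, ← map_inv₀,
    ← coe_le_coe, coe_mul, coe_dual_one, ← le_traceDual, le_traceDual_comm,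
    coe_extendedHom_eq_span, span_algebraMap_image_le_traceDual_iff]
  simp only [mem_iff_forall_mem_inv_mul_mem_range h𝔡]
  exact forall₂_comm

/-- Let `A` be a Dedekind domain with fraction field `K`, `L` a finite
separable extension of `K`, and `B` the integral closure of `A` in `L` (so `B` is a
Dedekind domain with fraction field `L`).  Let `𝒟 = differentIdeal A B` be the different
ideal and `Tr = Algebra.trace K L` the field trace.  Then for nonzero fractional ideals
`𝔇` of `B` and `𝔡` of `A`:  `Tr(𝔇) ⊆ 𝔡  ↔  𝔇 ⊆ 𝔡 · 𝒟⁻¹`. -/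
theorem trace_fractionalIdeal_le_iff_le_mul_inv_differentIdeal
    (A K L B : Type*) [CommRing A] [Field K] [CommRing B] [Field L]
    [Algebra A K] [IsFractionRing A K]
    [Algebra B L] [IsFractionRing B L]
    [Algebra A B] [Algebra K L] [Algebra A L]
    [IsScalarTower A K L] [IsScalarTower A B L]
    [IsIntegralClosure B A L]
    [FiniteDimensional K L] [Algebra.IsSeparable K L]
    [IsDedekindDomain A] [IsDedekindDomain B] [NoZeroSMulDivisors A B]
    (𝔇 : FractionalIdeal B⁰ L) (h𝔇 : 𝔇 ≠ 0)
    (𝔡 : FractionalIdeal A⁰ K) (h𝔡 : 𝔡 ≠ 0) :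
    (∀ x ∈ 𝔇, Algebra.trace K L x ∈ 𝔡) ↔
      𝔇 ≤
        FractionalIdeal.extended L
            (nonZeroDivisors_le_comap_nonZeroDivisors_of_injective _
              (FaithfulSMul.algebraMap_injective A B)) 𝔡 *
          ((differentIdeal A B : FractionalIdeal B⁰ L))⁻¹ :=
  trace_fractionalIdeal_le_iff_le_mul_inv_differentIdeal_general A K L B 𝔇 𝔡 h𝔡
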